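/- arXiv:1904.08277 — 3 statements merged into one kernel-verified Lean document; each statement's English description precedes it below -/
import Mathlib

section
/- Let γ > 1 be a real number and let g₁, g₂ : [0, ∞) → [0, ∞) be continuous functions with g₁(0) = 0. For A ≥ 0 define β_A to be the set of continuous functions y : [0, ∞) → [0, ∞) such that y(t) ≤ A + g₁(A) · y(t) + g₂(A) · y(t)^γ for all t ≥ 0 and y(0) ≤ A. Then there exists A₀ > 0 such that for every A with 0 < A < A₀ and every y ∈ β_A one has sup_{t ≥ 0} y(t) ≤ 2A. -/
open Set

/-- Let `γ > 1` and `g₁, g₂ : [0,∞) → [0,∞)` be continuous with `g₁ 0 = 0`.  For `A ≥ 0` let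
`β_A` be the set of continuous `y : [0,∞) → [0,∞)` with `y t ≤ A + g₁ A * y t + g₂ A * (y t)^γ`
for all `t ≥ 0` and `y 0 ≤ A`.  Then there is `A₀ > 0` such that for all `0 < A < A₀` and all
`y ∈ β_A` one has `sup_{t ≥ 0} y t ≤ 2A`. -/
theorem stmt4 (γ : ℝ) (hγ : 1 < γ) (g₁ g₂ : ℝ → ℝ)
    (hg₁c : ContinuousOn g₁ (Ici 0)) (hg₂c : ContinuousOn g₂ (Ici 0))
    (hg₁nn : ∀ A ≥ (0:ℝ), 0 ≤ g₁ A) (hg₂nn : ∀ A ≥ (0:ℝ), 0 ≤ g₂ A)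
    (hg₁0 : g₁ 0 = 0) :
    ∃ A₀ > (0:ℝ), ∀ A : ℝ, 0 < A → A < A₀ →
      ∀ y : ℝ → ℝ, ContinuousOn y (Ici 0) → (∀ t ≥ (0:ℝ), 0 ≤ y t) →
        (∀ t ≥ (0:ℝ), y t ≤ A + g₁ A * y t + g₂ A * (y t) ^ γ) → y 0 ≤ A →
        ∀ t ≥ (0:ℝ), y t ≤ 2 * A := by
  have h2γ : (0:ℝ) < 2 ^ γ := Real.rpow_pos_of_pos two_pos γ
  set M : ℝ := g₂ 0 + 1 with hM
  have hMpos : 0 < M := by have := hg₂nn 0 le_rfl; simp [hM]; linarith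
  set e : ℝ := γ - 1 with he
  have hepos : 0 < e := by simp [he]; linarith
  set c : ℝ := 1 / (4 * M * 2 ^ γ) with hc
  have hcpos : 0 < c := by positivity
  -- eventual smallness of g₁ and boundedness of g₂ near 0
  have t₁ : Filter.Tendsto g₁ (nhdsWithin 0 (Ici 0)) (nhds 0) := by
    have := hg₁c 0 self_mem_Ici
    rwa [ContinuousWithinAt, hg₁0] at this
  have t₂ : Filter.Tendsto g₂ (nhdsWithin 0 (Ici 0)) (nhds (g₂ 0)) :=
    hg₂c 0 self_mem_Ici
  have h1 : ∀ᶠ A in nhdsWithin 0 (Ici 0), g₁ A < 1/4 :=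
    t₁.eventually (Filter.tendsto_id.eventually_lt_const (by norm_num))
  have h2 : ∀ᶠ A in nhdsWithin 0 (Ici 0), g₂ A < M :=
    t₂.eventually (Filter.tendsto_id.eventually_lt_const (by simp [hM]))
  obtain ⟨δ, hδpos, hδ⟩ := Metric.mem_nhdsWithin_iff.mp (h1.and h2)
  refine ⟨min δ (c ^ (1/e)), lt_min hδpos (Real.rpow_pos_of_pos hcpos _), ?_⟩
  intro A hA hAlt y hyc hynn hineq hy0 t ht
  have hAδ : A < δ := lt_of_lt_of_le hAlt (min_le_left _ _)
  have hbd := hδ ⟨by simp [Metric.mem_ball, Real.dist_eq, abs_of_pos hA, hAδ], hA.le⟩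
  have hg1A : g₁ A < 1/4 := hbd.1
  have hg2A : g₂ A < M := hbd.2
  have hAe : A ^ e < c := by
    have h1 : A ^ e < (c ^ (1/e)) ^ e :=
      Real.rpow_lt_rpow hA.le (lt_of_lt_of_le hAlt (min_le_right _ _)) hepos
    have h2 : (c ^ (1/e)) ^ e = c := by
      rw [← Real.rpow_mul hcpos.le, one_div_mul_cancel hepos.ne', Real.rpow_one]
    rwa [h2] at h1
  by_contra hcon
  push_neg at hcon
  -- IVT: find s with y s = 2A
  have hsub : Icc (0:ℝ) t ⊆ Ici 0 := fun x hx => hx.1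
  have hiv := intermediate_value_Icc ht (hyc.mono hsub)
  have hmem : 2 * A ∈ Icc (y 0) (y t) := ⟨by linarith, hcon.le⟩
  obtain ⟨s, hs, hys⟩ := hiv hmem
  have hs0 : (0:ℝ) ≤ s := hs.1
  have hineqs := hineq s hs0
  rw [hys] at hineqs
  -- estimate g₂ A * (2A)^γ ≤ A/4
  have hpow : (2 * A) ^ γ = 2 ^ γ * (A ^ e * A) := by
    rw [Real.mul_rpow (by norm_num) hA.le]
    congr 1
    have : γ = e + 1 := by simp [he]
    rw [this, Real.rpow_add hA, Real.rpow_one]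
  have hb2 : g₂ A * (2 * A) ^ γ ≤ A / 4 := by
    rw [hpow]
    have step1 : g₂ A * (2 ^ γ * (A ^ e * A)) ≤ M * (2 ^ γ * (c * A)) := by
      have hAepos : (0:ℝ) ≤ A ^ e := Real.rpow_nonneg hA.le e
      have : A ^ e * A ≤ c * A := mul_le_mul_of_nonneg_right hAe.le hA.le
      have h3 : 2 ^ γ * (A ^ e * A) ≤ 2 ^ γ * (c * A) :=
        mul_le_mul_of_nonneg_left this h2γ.le
      calc g₂ A * (2 ^ γ * (A ^ e * A)) ≤ M * (2 ^ γ * (A ^ e * A)) := by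
            apply mul_le_mul_of_nonneg_right hg2A.le; positivity
        _ ≤ M * (2 ^ γ * (c * A)) := mul_le_mul_of_nonneg_left h3 hMpos.le
    have heq : M * (2 ^ γ * (c * A)) = A / 4 := by
      rw [hc]; field_simp
    exact le_of_le_of_eq step1 heq
  have hb1 : g₁ A * (2 * A) ≤ A / 2 := by nlinarith
  linarith
end

section
/- For every Schwartz function f : ℝ³ → ℝ, − ∫_{ℝ³} f(v) · (ℒf)(v) dv = ∫_{ℝ³} | ∇_v((I − P₀)f)(v) + (v/2) · ((I − P₀)f)(v) |² dv, where (I − P₀)f = f − a^f √M. -/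
open MeasureTheory Real

noncomputable section

abbrev E3 := EuclideanSpace ℝ (Fin 3)

/-- The normalized global Maxwellian `M(v) = (2π)^{-3/2} exp(-|v|²/2)`. -/
def Mw (v : E3) : ℝ := (2 * π) ^ (-(3:ℝ)/2) * Real.exp (-‖v‖ ^ 2 / 2)

/-- `√M`. -/
def sqrtM (v : E3) : ℝ := Real.sqrt (Mw v)

/-- Partial derivative in the `i`-th coordinate direction. -/
def pd (i : Fin 3) (f : E3 → ℝ) : E3 → ℝ :=
  fun v => fderiv ℝ f v (EuclideanSpace.single i 1)

/-- The linearized Fokker–Planck operator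
`ℒf = M^{-1/2} div_v ( M ∇_v (f M^{-1/2}) )`. -/
def Lop (f : E3 → ℝ) : E3 → ℝ := fun v =>
  (sqrtM v)⁻¹ * ∑ i, pd i (fun w => Mw w * pd i (fun u => f u / sqrtM u) w) v

/-- `a^f = ∫ √M f`. -/
def aF (f : E3 → ℝ) : ℝ := ∫ v, sqrtM v * f v

/-- `b^f = ∫ v √M f` (componentwise). -/
def bF (f : E3 → ℝ) (i : Fin 3) : ℝ := ∫ v, v i * sqrtM v * f v

/-- `ω^f = ∫ ((|v|²-3)/√6) √M f`. -/
def wF (f : E3 → ℝ) : ℝ := ∫ v, ((‖v‖ ^ 2 - 3) / Real.sqrt 6) * sqrtM v * f v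

/-- The macroscopic projection `Pf = (a^f + b^f · v + ω^f (|v|²-3)/√6) √M`. -/
def Pmac (f : E3 → ℝ) : E3 → ℝ := fun v =>
  (aF f + (∑ i, bF f i * v i) + wF f * ((‖v‖ ^ 2 - 3) / Real.sqrt 6)) * sqrtM v

/-- The squared weighted norm `|g|_ν² = ∫ (|∇_v g|² + (1+|v|²) g²)`. -/
def nuSq (g : E3 → ℝ) : ℝ :=
  ∫ v, ((∑ i, (pd i g v) ^ 2) + (1 + ‖v‖ ^ 2) * (g v) ^ 2)

/-! With `D_i = ∂_i + v_i/2` one has `M ∂_i (f/√M) = √M D_i f` and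
`∂_i (√M h) = √M (∂_i - v_i/2) h`, so `ℒ = ∑_i (∂_i - v_i/2) D_i`. Since `∂_i - v_i/2` is the
formal adjoint of `-D_i`, integration by parts gives `-∫ f ℒf = ∑_i ∫ (D_i f)²`. Finally
`D_i √M = 0`, so `D_i f = D_i (I - P₀)f`. -/

open scoped SchwartzMap LineDeriv

section IntegrationByParts

variable {D : Type*} [NormedAddCommGroup D] [NormedSpace ℝ D]

def twistedDeriv (g : D → ℝ) (m : D) : 𝓢(D, ℝ) →L[ℝ] 𝓢(D, ℝ) :=
  LineDeriv.lineDerivOpCLM ℝ 𝓢(D, ℝ) m + SchwartzMap.smulLeftCLM ℝ g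

theorem twistedDeriv_apply {g : D → ℝ} (hg : g.HasTemperateGrowth) (m : D) (f : 𝓢(D, ℝ))
    (x : D) : twistedDeriv g m f x = ∂_{m} f x + g x * f x := by
  simp [twistedDeriv, hg]

variable [FiniteDimensional ℝ D] [MeasurableSpace D] [BorelSpace D] {μ : Measure D}
  [μ.IsAddHaarMeasure]

theorem SchwartzMap.integrable_mul (f g : 𝓢(D, ℝ)) : Integrable (fun x => f x * g x) μ :=
  (SchwartzMap.pairing (ContinuousLinearMap.mul ℝ ℝ) f g).integrable

theorem integral_mul_twistedDeriv_neg {g : D → ℝ} (hg : g.HasTemperateGrowth) (m : D)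
    (f h : 𝓢(D, ℝ)) :
    ∫ x, f x * twistedDeriv (-g) m h x ∂μ = -∫ x, twistedDeriv g m f x * h x ∂μ := by
  set gf := SchwartzMap.smulLeftCLM ℝ g f
  have hgf (x : D) : gf x = g x * f x := by simp [gf, hg]
  calc ∫ x, f x * twistedDeriv (-g) m h x ∂μ
      = ∫ x, (f x * ∂_{m} h x - gf x * h x) ∂μ := by
        congr with x
        rw [twistedDeriv_apply hg.neg, hgf, Pi.neg_apply]
        ring
    _ = -∫ x, ∂_{m} f x * h x ∂μ - ∫ x, gf x * h x ∂μ := by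
        rw [integral_sub (SchwartzMap.integrable_mul _ _) (SchwartzMap.integrable_mul _ _),
          SchwartzMap.integral_mul_lineDerivOp_right_eq_neg_left]
    _ = -∫ x, (∂_{m} f x * h x + gf x * h x) ∂μ := by
        rw [integral_add (SchwartzMap.integrable_mul _ _) (SchwartzMap.integrable_mul _ _)]
        ring
    _ = -∫ x, twistedDeriv g m f x * h x ∂μ := by
        congr with x
        rw [twistedDeriv_apply hg, hgf]
        ring

end IntegrationByParts

section Maxwellian

theorem Mw_pos (v : E3) : 0 < Mw v := by unfold Mw; positivity

theorem sqrtM_pos (v : E3) : 0 < sqrtM v := Real.sqrt_pos.2 (Mw_pos v)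

theorem sqrtM_mul_self (v : E3) : sqrtM v * sqrtM v = Mw v :=
  Real.mul_self_sqrt (Mw_pos v).le

theorem sqrtM_eq_exp (v : E3) :
    sqrtM v = Real.sqrt ((2 * π) ^ (-(3:ℝ)/2)) * Real.exp (-‖v‖ ^ 2 / 4) := by
  rw [sqrtM, Mw, Real.sqrt_mul (by positivity), ← Real.exp_half]
  ring_nf

theorem hasFDerivAt_sqrtM (v : E3) : HasFDerivAt sqrtM (-(sqrtM v / 2) • innerSL ℝ v) v := by
  have h := (((hasFDerivAt_id v).norm_sq.const_mul (-1 / 4 : ℝ)).exp).const_mul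
    (Real.sqrt ((2 * π) ^ (-(3:ℝ)/2)))
  have hM : (fun w : E3 => Real.sqrt ((2 * π) ^ (-(3:ℝ)/2)) * Real.exp (-1 / 4 * ‖id w‖ ^ 2))
      = sqrtM := funext fun w => by rw [sqrtM_eq_exp, id]; ring_nf
  rw [hM] at h
  refine h.congr_fderiv ?_
  ext w
  simp only [id_eq, ContinuousLinearMap.comp_id, smul_apply, coe_innerSL_apply, nsmul_eq_mul,
    Nat.cast_ofNat, smul_eq_mul, sqrtM_eq_exp, neg_smul, neg_apply]
  ring_nf

theorem differentiable_sqrtM : Differentiable ℝ sqrtM :=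
  fun v => (hasFDerivAt_sqrtM v).differentiableAt

theorem pd_sqrtM (i : Fin 3) (v : E3) : pd i sqrtM v = -(v i / 2) * sqrtM v := by
  simp only [pd, (hasFDerivAt_sqrtM v).fderiv, neg_smul, neg_apply, smul_apply, coe_innerSL_apply,
    EuclideanSpace.inner_single_right, ringHom_apply, one_mul, smul_eq_mul, neg_mul, neg_inj]
  ring

end Maxwellian

section PartialDerivatives

variable {g h : E3 → ℝ} {v : E3}

theorem pd_mul (hg : DifferentiableAt ℝ g v) (hh : DifferentiableAt ℝ h v) (i : Fin 3) :
    pd i (fun w => g w * h w) v = pd i g v * h v + g v * pd i h v := by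
  simp only [pd, fderiv_fun_mul hg hh, add_apply, smul_apply, smul_eq_mul]
  ring

theorem pd_sqrtM_mul (hg : DifferentiableAt ℝ g v) (i : Fin 3) :
    pd i (fun w => sqrtM w * g w) v = sqrtM v * (pd i g v - v i / 2 * g v) := by
  rw [pd_mul (differentiable_sqrtM v) hg, pd_sqrtM]
  ring

theorem pd_div_sqrtM (hg : DifferentiableAt ℝ g v) (i : Fin 3) :
    pd i (fun w => g w / sqrtM w) v = (pd i g v + v i / 2 * g v) / sqrtM v := by
  have hq : DifferentiableAt ℝ (fun w => g w / sqrtM w) v := by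
    simpa only [div_eq_mul_inv] using
      hg.fun_mul ((differentiable_sqrtM v).fun_inv (sqrtM_pos v).ne')
  have hprod := pd_mul hq (differentiable_sqrtM v) i
  simp only [div_mul_cancel₀ _ (sqrtM_pos _).ne', pd_sqrtM] at hprod
  rw [hprod]
  field_simp [(sqrtM_pos v).ne']
  ring

theorem pd_sub_mul_sqrtM (hg : DifferentiableAt ℝ g v) (a : ℝ) (i : Fin 3) :
    pd i (fun w => g w - a * sqrtM w) v = pd i g v + a * (v i / 2) * sqrtM v := by
  rw [pd, fderiv_fun_sub hg ((differentiable_sqrtM v).const_mul a),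
    fderiv_const_mul (differentiable_sqrtM v)]
  change pd i g v - a * pd i sqrtM v = _
  rw [pd_sqrtM]
  ring

end PartialDerivatives

section FokkerPlanck

theorem hasTemperateGrowth_half_coord (i : Fin 3) :
    (fun v : E3 => v i / 2).HasTemperateGrowth := by
  have h := ((2⁻¹ : ℝ) • (EuclideanSpace.proj i : E3 →L[ℝ] ℝ)).hasTemperateGrowth
  convert h using 1
  ext v
  simp [div_eq_inv_mul]

def maxwellDeriv (i : Fin 3) : 𝓢(E3, ℝ) →L[ℝ] 𝓢(E3, ℝ) :=
  twistedDeriv (fun v : E3 => v i / 2) (EuclideanSpace.single i 1)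

theorem pd_eq_lineDerivOp (i : Fin 3) (f : 𝓢(E3, ℝ)) (v : E3) :
    pd i f v = ∂_{(EuclideanSpace.single i 1 : E3)} f v :=
  (SchwartzMap.lineDerivOp_apply_eq_fderiv _ _ _).symm

theorem maxwellDeriv_apply (i : Fin 3) (f : 𝓢(E3, ℝ)) (v : E3) :
    maxwellDeriv i f v = pd i f v + v i / 2 * f v := by
  rw [maxwellDeriv, twistedDeriv_apply (hasTemperateGrowth_half_coord i), pd_eq_lineDerivOp]

theorem twistedDeriv_neg_half_coord_apply (i : Fin 3) (f : 𝓢(E3, ℝ)) (v : E3) :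
    twistedDeriv (-fun w : E3 => w i / 2) (EuclideanSpace.single i 1) f v
      = pd i f v - v i / 2 * f v := by
  rw [twistedDeriv_apply (hasTemperateGrowth_half_coord i).neg, pd_eq_lineDerivOp, Pi.neg_apply]
  ring

theorem Lop_eq_sum (f : 𝓢(E3, ℝ)) (v : E3) :
    Lop f v = ∑ i, twistedDeriv (-fun w : E3 => w i / 2) (EuclideanSpace.single i 1)
      (maxwellDeriv i f) v := by
  have hflux (i : Fin 3) : (fun w => Mw w * pd i (fun u => f u / sqrtM u) w)
      = fun w => sqrtM w * maxwellDeriv i f w := by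
    ext w
    rw [pd_div_sqrtM f.differentiableAt i, maxwellDeriv_apply, ← sqrtM_mul_self]
    field_simp [(sqrtM_pos w).ne']
  simp only [Lop, hflux, pd_sqrtM_mul (maxwellDeriv _ f).differentiableAt,
    twistedDeriv_neg_half_coord_apply, ← Finset.mul_sum]
  rw [inv_mul_cancel_left₀ (sqrtM_pos v).ne']

end FokkerPlanck

/-- For every Schwartz `f`, `-∫ f·ℒf = ∫ |∇_v((I-P₀)f) + (v/2)·(I-P₀)f|² dv`,
where `(I-P₀)f = f - a^f √M`. -/
theorem stmt5 (f : SchwartzMap E3 ℝ) :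
    -∫ v, f v * Lop ⇑f v
      = ∫ v, ∑ i,
          (pd i (fun w => f w - aF ⇑f * sqrtM w) v
            + (v i / 2) * (f v - aF ⇑f * sqrtM v)) ^ 2 := by
  have hrhs (v : E3) (i : Fin 3) :
      (pd i (fun w => f w - aF ⇑f * sqrtM w) v + (v i / 2) * (f v - aF ⇑f * sqrtM v)) ^ 2
        = maxwellDeriv i f v * maxwellDeriv i f v := by
    rw [pd_sub_mul_sqrtM f.differentiableAt, maxwellDeriv_apply]
    ring
  simp only [Lop_eq_sum, Finset.mul_sum, hrhs]
  rw [integral_finsetSum _ fun i _ => SchwartzMap.integrable_mul _ _,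
    integral_finsetSum _ fun i _ => SchwartzMap.integrable_mul _ _, ← Finset.sum_neg_distrib]
  refine Finset.sum_congr rfl fun i _ => ?_
  rw [integral_mul_twistedDeriv_neg (hasTemperateGrowth_half_coord i), neg_neg]
  rfl
end
end

section
/- If f : ℝ³ → ℝ is a Schwartz function with ℒf = 0 identically, then f(v) = a^f · √(M(v)) for all v; that is, the null space of the linearized Fokker–Planck operator ℒ is the one-dimensional span of √M. -/
open MeasureTheory Real

noncomputable section

/-!
Write `f = √M g` and `aᵢ f = √M ∂ᵢ g = ∂ᵢ f + vᵢ f / 2`. Then `ℒ = -∑ᵢ aᵢ* aᵢ`, where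
`aᵢ* = -∂ᵢ + vᵢ / 2` is the formal adjoint of `aᵢ` on Schwartz space, so
`0 = ∫ f ℒf = -∑ᵢ ∫ (aᵢ f)²`. Hence every `aᵢ f` vanishes, `g` is constant, and the constant
is `a^f` because `∫ M = 1`.
-/

open scoped LineDeriv SchwartzMap

namespace FokkerPlanck

lemma Mw_pos (v : E3) : 0 < Mw v := by
  unfold Mw
  positivity

lemma sqrtM_pos (v : E3) : 0 < sqrtM v := Real.sqrt_pos.mpr (Mw_pos v)

lemma sqrtM_sq (v : E3) : sqrtM v ^ 2 = Mw v := Real.sq_sqrt (Mw_pos v).le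

lemma sqrtM_eq : sqrtM = fun v => (2 * π) ^ (-(3:ℝ)/4) * Real.exp (-(1/4) * ‖v‖ ^ 2) := by
  funext v
  unfold sqrtM Mw
  rw [Real.sqrt_mul (by positivity), Real.sqrt_eq_rpow, ← Real.rpow_mul (by positivity),
    Real.sqrt_eq_rpow, ← Real.exp_mul]
  ring_nf

lemma hasFDerivAt_sqrtM (v : E3) : HasFDerivAt sqrtM (-(sqrtM v / 2) • innerSL ℝ v) v := by
  have hnorm : HasFDerivAt (fun w : E3 => ‖w‖ ^ 2) (2 • innerSL ℝ v) v := by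
    simpa using (hasFDerivAt_id v).norm_sq
  have := ((hnorm.const_mul (-(1/4) : ℝ)).exp).const_mul ((2 * π) ^ (-(3:ℝ)/4))
  rw [sqrtM_eq]
  refine this.congr_fderiv ?_
  ext u
  simp only [one_div, neg_mul, neg_smul, smul_neg, neg_apply, smul_apply, coe_innerSL_apply,
    nsmul_eq_mul, Nat.cast_ofNat, smul_eq_mul, neg_inj]
  ring

lemma differentiable_sqrtM : Differentiable ℝ sqrtM :=
  fun v => (hasFDerivAt_sqrtM v).differentiableAt

lemma integral_Mw : ∫ v, Mw v = 1 := by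
  have hexp (v : E3) : Real.exp (-‖v‖ ^ 2 / 2) = Real.exp (-(1/2) * ‖v‖ ^ 2) := by ring_nf
  simp only [Mw, hexp, integral_const_mul,
    GaussianFourier.integral_rexp_neg_mul_sq_norm (by norm_num : (0:ℝ) < 1/2),
    finrank_euclideanSpace_fin]
  rw [show π / (1/2) = 2 * π by ring, ← Real.rpow_add (by positivity)]
  norm_num

lemma pd_mul {a b : E3 → ℝ} {v : E3} (ha : DifferentiableAt ℝ a v) (hb : DifferentiableAt ℝ b v)
    (i : Fin 3) : pd i (fun w => a w * b w) v = pd i a v * b v + a v * pd i b v := by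
  simp only [pd, fderiv_fun_mul ha hb, add_apply, smul_apply, smul_eq_mul]
  ring

lemma pd_sqrtM (i : Fin 3) (v : E3) : pd i sqrtM v = -(v i / 2 * sqrtM v) := by
  simp only [pd, (hasFDerivAt_sqrtM v).fderiv, neg_smul, neg_apply, smul_apply,
    coe_innerSL_apply, EuclideanSpace.inner_single_right, ringHom_apply, one_mul, smul_eq_mul,
    neg_inj]
  ring

lemma contDiff_pd {n : ℕ} {f : E3 → ℝ} (hf : ContDiff ℝ (n + 1) f) (i : Fin 3) :
    ContDiff ℝ n (pd i f) :=
  (hf.fderiv_right le_rfl).clm_apply contDiff_const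

def annihilation (i : Fin 3) (f : E3 → ℝ) : E3 → ℝ := fun v => pd i f v + v i / 2 * f v

lemma differentiableAt_div_sqrtM {f : E3 → ℝ} {v : E3} (hf : DifferentiableAt ℝ f v) :
    DifferentiableAt ℝ (fun u => f u / sqrtM u) v := by
  simpa only [div_eq_mul_inv] using
    hf.fun_mul ((differentiable_sqrtM v).fun_inv (sqrtM_pos v).ne')

lemma pd_div_sqrtM {f : E3 → ℝ} {v : E3} (hf : DifferentiableAt ℝ f v) (i : Fin 3) :
    pd i (fun u => f u / sqrtM u) v = annihilation i f v / sqrtM v := by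
  have hprod := pd_mul (differentiableAt_div_sqrtM hf) (differentiable_sqrtM v) i
  simp only [div_mul_cancel₀ _ (sqrtM_pos _).ne', pd_sqrtM] at hprod
  rw [annihilation, hprod]
  field_simp [(sqrtM_pos v).ne']
  ring

lemma differentiable_annihilation {f : E3 → ℝ} (hf : ContDiff ℝ 2 f) (i : Fin 3) :
    Differentiable ℝ (annihilation i f) := by
  have := (contDiff_pd hf i).differentiable one_ne_zero
  have := hf.differentiable two_ne_zero
  unfold annihilation
  fun_prop

lemma Lop_eq_sum_annihilation {f : E3 → ℝ} (hf : ContDiff ℝ 2 f) (v : E3) :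
    Lop f v = ∑ i, (pd i (annihilation i f) v - v i / 2 * annihilation i f v) := by
  have hflux (i : Fin 3) : (fun w => Mw w * pd i (fun u => f u / sqrtM u) w)
      = fun w => sqrtM w * annihilation i f w := by
    funext w
    rw [pd_div_sqrtM (hf.differentiable two_ne_zero w), ← sqrtM_sq]
    field_simp [(sqrtM_pos w).ne']
  simp only [Lop, hflux, Finset.mul_sum]
  refine Finset.sum_congr rfl fun i _ => ?_
  rw [pd_mul (differentiable_sqrtM v) (differentiable_annihilation hf i v), pd_sqrtM]
  field_simp [(sqrtM_pos v).ne']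
  ring

lemma hasTemperateGrowth_half_coord (i : Fin 3) :
    Function.HasTemperateGrowth (fun v : E3 => v i / 2) := by
  convert ((2⁻¹ : ℝ) • EuclideanSpace.proj (𝕜 := ℝ) i).hasTemperateGrowth using 1
  ext v
  simp [div_eq_inv_mul]

def annihilationSchwartz (i : Fin 3) (f : 𝓢(E3, ℝ)) : 𝓢(E3, ℝ) :=
  ∂_{(EuclideanSpace.single i 1 : E3)} f + SchwartzMap.smulLeftCLM ℝ (fun v : E3 => v i / 2) f

def creationSchwartz (i : Fin 3) (g : 𝓢(E3, ℝ)) : 𝓢(E3, ℝ) :=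
  -∂_{(EuclideanSpace.single i 1 : E3)} g + SchwartzMap.smulLeftCLM ℝ (fun v : E3 => v i / 2) g

lemma coe_annihilationSchwartz (i : Fin 3) (f : 𝓢(E3, ℝ)) :
    ⇑(annihilationSchwartz i f) = annihilation i ⇑f := by
  funext v
  simp [annihilationSchwartz, annihilation, hasTemperateGrowth_half_coord, pd,
    SchwartzMap.lineDerivOp_apply_eq_fderiv]

lemma creationSchwartz_apply (i : Fin 3) (g : 𝓢(E3, ℝ)) (v : E3) :
    creationSchwartz i g v = -pd i ⇑g v + v i / 2 * g v := by
  simp [creationSchwartz, hasTemperateGrowth_half_coord, pd,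
    SchwartzMap.lineDerivOp_apply_eq_fderiv]

lemma integrable_schwartz_mul {D : Type*} [NormedAddCommGroup D] [NormedSpace ℝ D]
    [MeasurableSpace D] [BorelSpace D] [FiniteDimensional ℝ D] {μ : Measure D}
    [μ.HasTemperateGrowth] (f g : 𝓢(D, ℝ)) : Integrable (fun x => f x * g x) μ :=
  (SchwartzMap.bilinLeftCLM (ContinuousLinearMap.mul ℝ ℝ) g.hasTemperateGrowth f).integrable

lemma integral_mul_creationSchwartz (i : Fin 3) (f g : 𝓢(E3, ℝ)) :
    ∫ v, f v * creationSchwartz i g v = ∫ v, annihilationSchwartz i f v * g v := by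
  let m : E3 := EuclideanSpace.single i 1
  let S := SchwartzMap.smulLeftCLM ℝ (fun v : E3 => v i / 2)
  have hS (φ : 𝓢(E3, ℝ)) (v : E3) : S φ v = v i / 2 * φ v := by
    simp [S, hasTemperateGrowth_half_coord]
  have hleft : ∫ v, f v * creationSchwartz i g v
      = -(∫ v, f v * ∂_{m} g v) + ∫ v, f v * S g v := by
    simp only [creationSchwartz, add_apply, neg_apply, mul_add, mul_neg]
    rw [integral_add (integrable_schwartz_mul f (∂_{m} g)).fun_neg
      (integrable_schwartz_mul f (S g)), integral_neg]
  have hright : ∫ v, annihilationSchwartz i f v * g v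
      = (∫ v, ∂_{m} f v * g v) + ∫ v, S f v * g v := by
    simp only [annihilationSchwartz, add_apply, add_mul]
    exact integral_add (integrable_schwartz_mul (∂_{m} f) g) (integrable_schwartz_mul (S f) g)
  have hmult : ∫ v, f v * S g v = ∫ v, S f v * g v := by
    congr 1 with v
    rw [hS, hS]
    ring
  rw [hleft, hright, hmult, SchwartzMap.integral_mul_lineDerivOp_right_eq_neg_left, neg_neg]

lemma Lop_eq_neg_sum_creation_annihilation (f : 𝓢(E3, ℝ)) (v : E3) :
    Lop f v = -∑ i, creationSchwartz i (annihilationSchwartz i f) v := by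
  simp only [Lop_eq_sum_annihilation (f.smooth 2), creationSchwartz_apply,
    coe_annihilationSchwartz, ← Finset.sum_neg_distrib]
  congr 1 with i
  ring

lemma integral_mul_Lop (f : 𝓢(E3, ℝ)) :
    ∫ v, f v * Lop f v = -∑ i, ∫ v, annihilationSchwartz i f v ^ 2 := by
  simp only [Lop_eq_neg_sum_creation_annihilation, mul_neg, Finset.mul_sum]
  rw [integral_neg, integral_finsetSum _ fun i _ => integrable_schwartz_mul _ _]
  simp only [integral_mul_creationSchwartz, sq]

lemma eq_zero_of_integral_sq_eq_zero {D : Type*} [NormedAddCommGroup D] [NormedSpace ℝ D]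
    [MeasurableSpace D] [BorelSpace D] [FiniteDimensional ℝ D] {μ : Measure D}
    [μ.HasTemperateGrowth] [μ.IsOpenPosMeasure] (φ : 𝓢(D, ℝ)) (h : ∫ x, φ x ^ 2 ∂μ = 0) :
    φ = 0 := by
  simp only [sq] at h
  have hae := (integral_eq_zero_iff_of_nonneg (fun x => mul_self_nonneg (φ x))
    (integrable_schwartz_mul φ φ)).mp h
  have hsq := (Continuous.ae_eq_iff_eq μ (by fun_prop) continuous_const).mp hae
  ext x
  exact mul_self_eq_zero.mp (congrFun hsq x)

lemma annihilationSchwartz_eq_zero_of_Lop_eq_zero {f : 𝓢(E3, ℝ)} (h : ∀ v, Lop f v = 0)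
    (i : Fin 3) : annihilationSchwartz i f = 0 := by
  have hsum : ∑ i, ∫ v, annihilationSchwartz i f v ^ 2 = 0 := by
    simpa [h] using integral_mul_Lop f
  refine eq_zero_of_integral_sq_eq_zero (μ := volume) _ ?_
  exact (Finset.sum_eq_zero_iff_of_nonneg fun j _ => integral_nonneg fun v => sq_nonneg _).mp
    hsum i (Finset.mem_univ i)

lemma fderiv_eq_zero_of_pd_eq_zero {g : E3 → ℝ} {v : E3} (h : ∀ i, pd i g v = 0) :
    fderiv ℝ g v = 0 := by
  apply ContinuousLinearMap.coe_injective
  refine (EuclideanSpace.basisFun (Fin 3) ℝ).toBasis.ext fun i => ?_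
  simpa [pd] using h i

lemma exists_eq_const_mul_sqrtM_of_annihilation_eq_zero {f : E3 → ℝ} (hf : Differentiable ℝ f)
    (h : ∀ i v, annihilation i f v = 0) : ∃ c, ∀ v, f v = c * sqrtM v := by
  have hconst := is_const_of_fderiv_eq_zero (fun v => differentiableAt_div_sqrtM (hf v)) fun v =>
    fderiv_eq_zero_of_pd_eq_zero fun i => by rw [pd_div_sqrtM (hf v), h, zero_div]
  refine ⟨f 0 / sqrtM 0, fun v => ?_⟩
  rw [← hconst v 0, div_mul_cancel₀ _ (sqrtM_pos v).ne']

lemma aF_const_mul_sqrtM (c : ℝ) : aF (fun v => c * sqrtM v) = c := by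
  have hM (v : E3) : sqrtM v * (c * sqrtM v) = c * Mw v := by rw [← sqrtM_sq]; ring
  simp only [aF, hM, integral_const_mul, integral_Mw, mul_one]

end FokkerPlanck

open FokkerPlanck

/-- If a Schwartz function satisfies `ℒf = 0` identically then `f = a^f √M`:
the null space of `ℒ` is spanned by `√M`. -/
theorem stmt6 (f : SchwartzMap E3 ℝ) (h : ∀ v, Lop ⇑f v = 0) :
    ∀ v, f v = aF ⇑f * sqrtM v := by
  have hann (i : Fin 3) (v : E3) : annihilation i f v = 0 := by
    rw [← coe_annihilationSchwartz, annihilationSchwartz_eq_zero_of_Lop_eq_zero h i, zero_apply]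
  obtain ⟨c, hc⟩ := exists_eq_const_mul_sqrtM_of_annihilation_eq_zero f.differentiable hann
  have hf : ⇑f = fun v => c * sqrtM v := funext hc
  intro v
  rw [hf, aF_const_mul_sqrtM]
end
end
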